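/- arXiv:1402.6484 — 3 statements merged into one kernel-verified Lean document; each statement's English description precedes it below -/
import Mathlib

section
/- Let α ∈ ℝ be irrational. Equip the 2-torus T² = (ℝ/ℤ) × (ℝ/ℤ) with its Haar probability measure μ. Then for every continuous function f : T² → ℝ and every point p ∈ T², the time averages along the linear flow with direction (1, α) converge to the space average: (1/T) ∫₀^T f(p + ([t], [α·t])) dt → ∫_{T²} f dμ as T → ∞, where [s] denotes the class of s ∈ ℝ in ℝ/ℤ. -/
/-!
Along the flow `t ↦ p + t • v`, a character `x ↦ exp (2πi ⟪n, x⟫)` of the torus just picks up the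
phase `exp (2πi ⟪n, v⟫ t)`. If `⟪n, v⟫ ≠ 0` for every `n ≠ 0`, which for `v = (1, α)` is the
irrationality of `α`, the time average of this phase is `O(1/T)`, hence tends to `0`, the integral
of a nontrivial character. Time averages are linear functionals of norm at most `1`, so the
continuous functions whose time averages converge to their space average form a closed subspace.
It contains all characters, whose span is dense by Stone–Weierstrass.
-/

open MeasureTheory Filter Topology Submodule Complex Real

theorem ContinuousLinearMap.tendsto_apply_of_tendsto_on_span_dense {ι 𝕜 E F : Type*}
    [NontriviallyNormedField 𝕜] [SeminormedAddCommGroup E] [NormedSpace 𝕜 E]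
    [NormedAddCommGroup F] [NormedSpace 𝕜 F] {L : ι → E →L[𝕜] F} {Λ : E →L[𝕜] F}
    {l : Filter ι} {C : ℝ} (hL : ∀ i, ‖L i‖ ≤ C) {S : Set E}
    (hS : (span 𝕜 S).topologicalClosure = ⊤) (h : ∀ s ∈ S, Tendsto (L · s) l (𝓝 (Λ s)))
    (x : E) : Tendsto (L · x) l (𝓝 (Λ x)) := by
  let convergent : Submodule 𝕜 E :=
    { carrier := {x | Tendsto (L · x) l (𝓝 (Λ x))}
      add_mem' := fun hx hy => by simpa using hx.add hy
      zero_mem' := by simpa using tendsto_const_nhds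
      smul_mem' := fun c _ hx => by simpa using hx.const_smul c }
  have hequi : Equicontinuous ((↑) ∘ L) :=
    ((NormedSpace.equicontinuous_TFAE L).out 5 1).mp (⟨C, hL⟩ : ∃ C, ∀ i, ‖L i‖ ≤ C)
  have hclosed : IsClosed (convergent : Set E) := hequi.isClosed_setOfPred_tendsto Λ.continuous
  have hspan : span 𝕜 S ≤ convergent := span_le.mpr h
  have hx : x ∈ (span 𝕜 S).topologicalClosure := hS ▸ mem_top
  exact topologicalClosure_minimal _ hspan hclosed hx

namespace ContinuousMap

variable {X : Type*} [TopologicalSpace X] [CompactSpace X]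

noncomputable def timeAverage (γ : C(ℝ, X)) (T : ℝ) : C(X, ℂ) →L[ℂ] ℂ :=
  LinearMap.mkContinuous
    { toFun g := (T : ℂ)⁻¹ * ∫ t in 0..T, g (γ t)
      map_add' g h := by
        have hg : IntervalIntegrable (fun t => g (γ t)) volume 0 T :=
          (by fun_prop : Continuous _).intervalIntegrable 0 T
        have hh : IntervalIntegrable (fun t => h (γ t)) volume 0 T :=
          (by fun_prop : Continuous _).intervalIntegrable 0 T
        rw [← mul_add, ← intervalIntegral.integral_add hg hh]
        rfl
      map_smul' c g := by
        simp only [smul_apply, smul_eq_mul, intervalIntegral.integral_const_mul,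
          RingHom.id_apply]
        ring }
    1 fun g => by
      change ‖(T : ℂ)⁻¹ * ∫ t in 0..T, g (γ t)‖ ≤ 1 * ‖g‖
      rcases eq_or_ne T 0 with rfl | hT
      · simp
      have hint : ‖∫ t in 0..T, g (γ t)‖ ≤ ‖g‖ * |T| := by
        simpa using intervalIntegral.norm_integral_le_of_norm_le_const (a := 0) (b := T)
          fun t _ => g.norm_coe_le_norm (γ t)
      calc ‖(T : ℂ)⁻¹ * ∫ t in 0..T, g (γ t)‖ = |T|⁻¹ * ‖∫ t in 0..T, g (γ t)‖ := by simp
        _ ≤ |T|⁻¹ * (‖g‖ * |T|) := by gcongr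
        _ = 1 * ‖g‖ := by field_simp

theorem timeAverage_apply (γ : C(ℝ, X)) (T : ℝ) (g : C(X, ℂ)) :
    timeAverage γ T g = (T : ℂ)⁻¹ * ∫ t in 0..T, g (γ t) := rfl

theorem norm_timeAverage_le (γ : C(ℝ, X)) (T : ℝ) : ‖timeAverage γ T‖ ≤ 1 :=
  LinearMap.mkContinuous_norm_le _ zero_le_one _

variable [MeasurableSpace X] [BorelSpace X]

noncomputable def integralCLM (μ : Measure X) [IsFiniteMeasure μ] : C(X, ℂ) →L[ℂ] ℂ :=
  L1.integralCLM' ℂ ∘L toLp 1 μ ℂ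

theorem integralCLM_apply (μ : Measure X) [IsFiniteMeasure μ] (g : C(X, ℂ)) :
    integralCLM μ g = ∫ x, g x ∂μ := by
  rw [integralCLM, ContinuousLinearMap.comp_apply, ← L1.integral_eq', L1.integral_eq_integral]
  exact integral_congr_ae (coeFn_toLp μ g)

theorem tendsto_timeAverage_of_span_dense (γ : C(ℝ, X)) (μ : Measure X) [IsFiniteMeasure μ]
    {S : Set C(X, ℂ)} (hS : (span ℂ S).topologicalClosure = ⊤)
    (h : ∀ g ∈ S, Tendsto (timeAverage γ · g) atTop (𝓝 (∫ x, g x ∂μ))) (g : C(X, ℂ)) :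
    Tendsto (timeAverage γ · g) atTop (𝓝 (∫ x, g x ∂μ)) := by
  simpa only [integralCLM_apply] using
    ContinuousLinearMap.tendsto_apply_of_tendsto_on_span_dense (Λ := integralCLM μ)
      (norm_timeAverage_le γ) hS (by simpa only [integralCLM_apply] using h) g

end ContinuousMap

theorem tendsto_inv_mul_integral_exp_mul_I {c : ℝ} (hc : c ≠ 0) :
    Tendsto (fun T : ℝ => (T : ℂ)⁻¹ * ∫ t in 0..T, exp (c * t * I)) atTop (𝓝 0) := by
  have hcI : (c : ℂ) * I ≠ 0 := mul_ne_zero (ofReal_ne_zero.mpr hc) I_ne_zero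
  have hbound : ∀ T : ℝ, ‖∫ t in 0..T, exp (c * t * I)‖ ≤ 2 / |c| := fun T => by
    simp_rw [mul_right_comm _ _ I]
    rw [integral_exp_mul_complex hcI, norm_div, norm_mul, norm_I, mul_one, norm_real,
      Real.norm_eq_abs, ofReal_zero, mul_zero, Complex.exp_zero]
    gcongr
    calc ‖exp (c * I * T) - 1‖ ≤ ‖exp (c * I * T)‖ + ‖(1 : ℂ)‖ := norm_sub_le _ _
      _ = 2 := by rw [mul_right_comm, ← ofReal_mul, norm_exp_ofReal_mul_I, norm_one]; norm_num
  have hinv : Tendsto (fun T : ℝ => |T|⁻¹) atTop (𝓝 0) :=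
    tendsto_inv_atTop_zero.comp tendsto_abs_atTop_atTop
  refine squeeze_zero_norm (fun T => ?_) (by simpa using hinv.mul_const (2 / |c|))
  rw [norm_mul, norm_inv, norm_real, Real.norm_eq_abs]
  exact mul_le_mul_of_nonneg_left (hbound T) (by positivity)

theorem fourier_apply_add {T : ℝ} (n : ℤ) (x y : AddCircle T) :
    fourier n (x + y) = fourier n x * fourier n y := by
  simp only [fourier_apply, smul_add, AddCircle.toCircle_add, Circle.coe_mul]

theorem AddCircle.integral_fourier_of_ne_zero {T : ℝ} [Fact (0 < T)] {n : ℤ} (hn : n ≠ 0) :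
    ∫ x : AddCircle T, fourier n x = 0 := by
  simpa [fourierCoeff, integral_haarAddCircle, hn, Ne.symm hn, (Fact.out : 0 < T).ne'] using
    congrFun (fourierCoeff_fourier (T := T) n) 0

instance : IsProbabilityMeasure (volume : Measure UnitAddCircle) :=
  ⟨by simp [AddCircle.measure_univ]⟩

namespace UnitAddTorus

noncomputable def linearFlow {d : Type*} (v : d → ℝ) (p : UnitAddTorus d) :
    C(ℝ, UnitAddTorus d) where
  toFun t := p + fun i => ((v i * t : ℝ) : UnitAddCircle)

theorem linearFlow_apply {d : Type*} (v : d → ℝ) (p : UnitAddTorus d) (t : ℝ) :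
    linearFlow v p t = p + fun i => ((v i * t : ℝ) : UnitAddCircle) := rfl

variable {d : Type*} [Fintype d]

def IsNonresonant (v : d → ℝ) : Prop :=
  ∀ n : d → ℤ, n ≠ 0 → ∑ i, n i * v i ≠ 0

theorem isNonresonant_vecCons_one_of_irrational {α : ℝ} (hα : Irrational α) :
    IsNonresonant ![1, α] := by
  intro n hn
  simp only [Fin.sum_univ_two, Matrix.cons_val_zero, Matrix.cons_val_one, mul_one]
  rcases eq_or_ne (n 1) 0 with h1 | h1
  · have h0 : n 0 ≠ 0 := fun h0 => hn (funext (Fin.forall_fin_two.mpr ⟨h0, h1⟩))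
    simpa [h1] using h0
  · exact ((hα.intCast_mul h1).intCast_add (n 0)).ne_zero

theorem integral_mFourier_of_ne_zero {n : d → ℤ} (hn : n ≠ 0) : ∫ x, mFourier n x = 0 := by
  obtain ⟨i, hi⟩ := Function.ne_iff.mp hn
  simp only [mFourier, ContinuousMap.coe_mk]
  rw [volume_pi, integral_fintype_prod_eq_prod (fun i => fourier (n i))]
  exact Finset.prod_eq_zero (Finset.mem_univ i) (AddCircle.integral_fourier_of_ne_zero hi)

theorem mFourier_linearFlow (n : d → ℤ) (v : d → ℝ) (p : UnitAddTorus d) (t : ℝ) :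
    mFourier n (linearFlow v p t) =
      mFourier n p * exp ((2 * π * ∑ i, n i * v i : ℝ) * t * I) := by
  simp only [mFourier, ContinuousMap.coe_mk, linearFlow_apply, Pi.add_apply, fourier_apply_add,
    Finset.prod_mul_distrib, fourier_coe_apply, ← Complex.exp_sum]
  congr 2
  push_cast
  rw [Finset.mul_sum, Finset.sum_mul, Finset.sum_mul]
  exact Finset.sum_congr rfl fun i _ => by ring

theorem tendsto_timeAverage_linearFlow_mFourier {v : d → ℝ}
    (hv : IsNonresonant v) (p : UnitAddTorus d) (n : d → ℤ) :
    Tendsto (ContinuousMap.timeAverage (linearFlow v p) · (mFourier n)) atTop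
      (𝓝 (∫ x, mFourier n x)) := by
  rcases eq_or_ne n 0 with rfl | hn
  · refine tendsto_const_nhds.congr' ?_
    filter_upwards [eventually_ne_atTop 0] with T hT
    simp [ContinuousMap.timeAverage_apply, mFourier_zero, hT]
  · rw [integral_mFourier_of_ne_zero hn]
    have hfreq : 2 * π * ∑ i, n i * v i ≠ 0 := mul_ne_zero two_pi_pos.ne' (hv n hn)
    simpa [ContinuousMap.timeAverage_apply, mFourier_linearFlow, mul_left_comm] using
      (tendsto_inv_mul_integral_exp_mul_I hfreq).const_mul (mFourier n p)

theorem tendsto_timeAverage_linearFlow {v : d → ℝ}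
    (hv : IsNonresonant v) (p : UnitAddTorus d) (g : C(UnitAddTorus d, ℂ)) :
    Tendsto (ContinuousMap.timeAverage (linearFlow v p) · g) atTop (𝓝 (∫ x, g x)) :=
  ContinuousMap.tendsto_timeAverage_of_span_dense _ volume span_mFourier_closure_eq_top
    (by rintro _ ⟨n, rfl⟩; exact tendsto_timeAverage_linearFlow_mFourier hv p n) g

theorem tendsto_inv_mul_integral_linearFlow {v : d → ℝ}
    (hv : IsNonresonant v) (p : UnitAddTorus d) (f : C(UnitAddTorus d, ℝ)) :
    Tendsto (fun T : ℝ => T⁻¹ * ∫ t in 0..T, f (linearFlow v p t)) atTop (𝓝 (∫ x, f x)) := by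
  have := reCLM.continuous.tendsto _ |>.comp <|
    tendsto_timeAverage_linearFlow hv p ⟨fun x => (f x : ℂ), by fun_prop⟩
  simpa [Function.comp_def, ContinuousMap.timeAverage_apply, intervalIntegral.integral_ofReal,
    integral_complex_ofReal, ← ofReal_inv, -ofReal_inv] using this

end UnitAddTorus

open UnitAddTorus in
/-- Unique ergodicity of the irrational linear flow on the 2-torus: for every
irrational `α`, continuous `f` and every starting point `p`, the time averages of `f` along the
flow with direction `(1, α)` converge to the space average of `f` with respect to the Haar
probability measure. -/
theorem irrational_linear_flow_time_averages_converge
    (α : ℝ) (hα : Irrational α)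
    (f : AddCircle (1 : ℝ) × AddCircle (1 : ℝ) → ℝ) (hf : Continuous f)
    (p : AddCircle (1 : ℝ) × AddCircle (1 : ℝ)) :
    Tendsto (fun T : ℝ => (1 / T) * ∫ t in (0:ℝ)..T,
        f (p + ((t : AddCircle (1 : ℝ)), ((α * t : ℝ) : AddCircle (1 : ℝ)))))
      atTop (nhds (∫ x, f x ∂(volume : Measure (AddCircle (1 : ℝ) × AddCircle (1 : ℝ))))) := by
  let f' : C(UnitAddTorus (Fin 2), ℝ) := ⟨fun x => f (x 0, x 1), by fun_prop⟩
  have hflow : ∀ t : ℝ, f' (linearFlow ![1, α] ![p.1, p.2] t) =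
      f (p + ((t : AddCircle (1 : ℝ)), ((α * t : ℝ) : AddCircle (1 : ℝ)))) := fun t => by
    simp only [f', ContinuousMap.coe_mk, linearFlow_apply, Pi.add_apply, Matrix.cons_val_zero,
      Matrix.cons_val_one, one_mul]
    rfl
  have hint : ∫ x, f' x = ∫ x, f x :=
    (volume_preserving_finTwoArrow UnitAddCircle).integral_comp' (g := f)
  simpa only [one_div, hflow, hint] using tendsto_inv_mul_integral_linearFlow
    (isNonresonant_vecCons_one_of_irrational hα) ![p.1, p.2] f'
end

section
/- Let a < d be real numbers, let ρ : ℝ → ℝ be continuous and positive on (a,d), and let X̄ ∈ ℝ³ be a constant vector with first component 0. Set X(p) := ρ(p₁) • X̄. Let ν̃ : ℝ³ → (ℝ³ →L[ℝ] ℝ) be a C¹ toroidally periodic 1-form satisfying i_X dν̃ = 0, i.e. Dν̃(p)(X(p))(v) = Dν̃(p)(v)(X(p)) for all p ∈ (a,d) × ℝ² and all v ∈ ℝ³. Then the function c(r) := ∫_{[0,1]²} ν̃(r, θ, φ)(X̄) dθ dφ is constant on (a,d). -/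
/-!
Write `g = ν(·)(X̄)` and `k = ν(·)(e₁)`. Taking `v = e₁` in `i_X dν = 0` and cancelling `ρ ≠ 0`
gives `∂ᵣ g = Dk(X̄)` on the slab `(a,d) × ℝ²`. As `X̄` is tangent to the tori, `Dk(X̄)` is a
combination of the `θ`- and `φ`-derivatives of the periodic function `k`, whose torus averages
vanish by the fundamental theorem of calculus. By Fubini, `c(r₂) - c(r₁)` is the integral over
`[r₁, r₂]` of the torus average of `∂ᵣ g`, hence zero.
-/

open Set

/-- A map on `ℝ³ = ℝ × ℝ × ℝ` is toroidally periodic if it is invariant under translation by `1`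
in the second and in the third coordinate, so that it descends to `ℝ × T²`. -/
def TorPeriodic {α : Type*} (f : ℝ × ℝ × ℝ → α) : Prop :=
  ∀ p : ℝ × ℝ × ℝ, f (p.1, p.2.1 + 1, p.2.2) = f p ∧ f (p.1, p.2.1, p.2.2 + 1) = f p

open intervalIntegral

section IteratedIntervalIntegral

variable {E : Type*} [NormedAddCommGroup E] [NormedSpace ℝ E] {F G : ℝ → ℝ → E}

theorem intervalIntegral_intervalIntegral_swap_of_continuous
    (hF : Continuous F.uncurry) (a b c d : ℝ) :
    ∫ x in a..b, ∫ y in c..d, F x y = ∫ y in c..d, ∫ x in a..b, F x y :=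
  MeasureTheory.intervalIntegral_intervalIntegral_swap <|
    (hF.continuousOn.integrableOn_compact (isCompact_uIcc.prod isCompact_uIcc)).mono_set
      (prod_mono uIoc_subset_uIcc uIoc_subset_uIcc)

theorem intervalIntegral_intervalIntegral_add_of_continuous
    (hF : Continuous F.uncurry) (hG : Continuous G.uncurry) (a b c d : ℝ) :
    ∫ x in a..b, ∫ y in c..d, F x y + G x y =
      (∫ x in a..b, ∫ y in c..d, F x y) + ∫ x in a..b, ∫ y in c..d, G x y := by
  have hF' : ∀ x, Continuous (F x) := fun x => hF.comp (Continuous.prodMk_right x)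
  have hG' : ∀ x, Continuous (G x) := fun x => hG.comp (Continuous.prodMk_right x)
  simp only [integral_add ((hF' _).intervalIntegrable c d) ((hG' _).intervalIntegrable c d)]
  exact integral_add
    ((continuous_parametric_intervalIntegral_of_continuous' hF c d).intervalIntegrable a b)
    ((continuous_parametric_intervalIntegral_of_continuous' hG c d).intervalIntegrable a b)

end IteratedIntervalIntegral

theorem integral_fderiv_comp_eq_sub {E F : Type*} [NormedAddCommGroup E] [NormedSpace ℝ E]
    [NormedAddCommGroup F] [NormedSpace ℝ F] [CompleteSpace F] {g : E → F}
    (hg : ContDiff ℝ 1 g) {L : ℝ → E} {u : E} (hL : ∀ t, HasDerivAt L u t) (a b : ℝ) :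
    ∫ t in a..b, fderiv ℝ g (L t) u = g (L b) - g (L a) := by
  have hLcont : Continuous L := continuous_iff_continuousAt.2 fun t => (hL t).continuousAt
  refine integral_eq_sub_of_hasDerivAt (fun t _ =>
      ((hg.differentiable one_ne_zero (L t)).hasFDerivAt).comp_hasDerivAt t (hL t))
    (Continuous.intervalIntegrable ?_ a b)
  exact ((hg.continuous_fderiv one_ne_zero).comp hLcont).clm_apply continuous_const

theorem TorPeriodic.comp {α β : Type*} {f : ℝ × ℝ × ℝ → α} (hf : TorPeriodic f) (F : α → β) :
    TorPeriodic (F ∘ f) := fun p => by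
  simp only [Function.comp_apply, (hf p).1, (hf p).2, and_self]

theorem fderiv_clm_apply_const {𝕜 E F G : Type*} [NontriviallyNormedField 𝕜]
    [NormedAddCommGroup E] [NormedSpace 𝕜 E] [NormedAddCommGroup F] [NormedSpace 𝕜 F]
    [NormedAddCommGroup G] [NormedSpace 𝕜 G] {ν : E → F →L[𝕜] G} {p : E}
    (hν : DifferentiableAt 𝕜 ν p) (w : F) (v : E) :
    fderiv 𝕜 (fun q => ν q w) p v = fderiv 𝕜 ν p v w := by
  simp [fderiv_clm_apply hν (differentiableAt_const w)]

theorem fderiv_clm_apply_const_comm_of_smul {𝕜 E G : Type*} [NontriviallyNormedField 𝕜]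
    [NormedAddCommGroup E] [NormedSpace 𝕜 E] [NormedAddCommGroup G] [NormedSpace 𝕜 G]
    {ν : E → E →L[𝕜] G} {p : E} (hν : DifferentiableAt 𝕜 ν p) {c : 𝕜} (hc : c ≠ 0) {u w : E}
    (h : fderiv 𝕜 ν p (c • w) u = fderiv 𝕜 ν p u (c • w)) :
    fderiv 𝕜 (fun q => ν q w) p u = fderiv 𝕜 (fun q => ν q u) p w := by
  rw [map_smul, smul_apply, map_smul] at h
  rw [fderiv_clm_apply_const hν, fderiv_clm_apply_const hν]
  exact (smul_right_injective G hc h).symm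

noncomputable def torusAverage (g : ℝ × ℝ × ℝ → ℝ) (r : ℝ) : ℝ :=
  ∫ θ in (0:ℝ)..1, ∫ φ in (0:ℝ)..1, g (r, θ, φ)

section TorusAverage

variable {g : ℝ × ℝ × ℝ → ℝ}

theorem torusAverage_eq_add_integral_fderiv (hg : ContDiff ℝ 1 g) (r₁ r₂ : ℝ) :
    torusAverage g r₂ =
      torusAverage g r₁ + ∫ r in r₁..r₂, torusAverage (fun p => fderiv ℝ g p (1, 0, 0)) r := by
  have hgc : Continuous g := hg.continuous
  have hcont : Continuous fun p => fderiv ℝ g p (1, 0, 0) :=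
    (hg.continuous_fderiv one_ne_zero).clm_apply continuous_const
  have hFTC : ∀ θ φ : ℝ, g (r₂, θ, φ) =
      g (r₁, θ, φ) + ∫ r in r₁..r₂, fderiv ℝ g (r, θ, φ) (1, 0, 0) := fun θ φ => by
    rw [integral_fderiv_comp_eq_sub hg (L := fun r => (r, θ, φ)) (u := (1, 0, 0))
      (fun r => (hasDerivAt_id r).prodMk (hasDerivAt_const r (θ, φ)))]
    abel
  calc torusAverage g r₂
      = torusAverage g r₁ + ∫ θ in (0:ℝ)..1, ∫ φ in (0:ℝ)..1,
          ∫ r in r₁..r₂, fderiv ℝ g (r, θ, φ) (1, 0, 0) := by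
        simp only [torusAverage, hFTC]
        exact intervalIntegral_intervalIntegral_add_of_continuous
          (F := fun θ φ => g (r₁, θ, φ)) (by fun_prop) (by fun_prop) 0 1 0 1
    _ = torusAverage g r₁ + ∫ θ in (0:ℝ)..1, ∫ r in r₁..r₂,
          ∫ φ in (0:ℝ)..1, fderiv ℝ g (r, θ, φ) (1, 0, 0) := by
        refine congrArg (_ + ·) (integral_congr fun θ _ => ?_)
        exact intervalIntegral_intervalIntegral_swap_of_continuous (by fun_prop) _ _ _ _
    _ = _ := by
        rw [intervalIntegral_intervalIntegral_swap_of_continuous (by fun_prop)]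
        rfl

theorem torusAverage_fderiv_eq_zero (hg : ContDiff ℝ 1 g) (hper : TorPeriodic g)
    {v : ℝ × ℝ × ℝ} (hv : v.1 = 0) (r : ℝ) :
    torusAverage (fun p => fderiv ℝ g p v) r = 0 := by
  have hcont : ∀ w, Continuous fun p => fderiv ℝ g p w := fun w =>
    (hg.continuous_fderiv one_ne_zero).clm_apply continuous_const
  have hθ : ∀ φ, ∫ θ in (0:ℝ)..1, fderiv ℝ g (r, θ, φ) (0, 1, 0) = 0 := fun φ => by
    rw [integral_fderiv_comp_eq_sub hg (L := fun θ => (r, θ, φ)) (u := (0, 1, 0))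
      (fun θ => (hasDerivAt_const θ r).prodMk ((hasDerivAt_id θ).prodMk (hasDerivAt_const θ φ)))]
    simpa using sub_eq_zero.2 (hper (r, 0, φ)).1
  have hφ : ∀ θ, ∫ φ in (0:ℝ)..1, fderiv ℝ g (r, θ, φ) (0, 0, 1) = 0 := fun θ => by
    rw [integral_fderiv_comp_eq_sub hg (L := fun φ => (r, θ, φ)) (u := (0, 0, 1))
      (fun φ => (hasDerivAt_const φ r).prodMk ((hasDerivAt_const φ θ).prodMk (hasDerivAt_id φ)))]
    simpa using sub_eq_zero.2 (hper (r, θ, 0)).2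
  have hv' : v = v.2.1 • (0, 1, 0) + v.2.2 • (0, 0, 1) := by
    ext <;> simp [hv]
  have hdecomp : ∀ p, fderiv ℝ g p v =
      v.2.1 * fderiv ℝ g p (0, 1, 0) + v.2.2 * fderiv ℝ g p (0, 0, 1) := fun p => by
    conv_lhs => rw [hv', map_add, map_smul, map_smul]
    rfl
  simp only [torusAverage, hdecomp]
  rw [intervalIntegral_intervalIntegral_add_of_continuous (by fun_prop) (by fun_prop)]
  simp only [integral_const_mul, hφ, intervalIntegral_intervalIntegral_swap_of_continuous
    (F := fun θ φ => fderiv ℝ g (r, θ, φ) (0, 1, 0)) (by fun_prop), hθ]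
  simp

end TorusAverage

theorem torus_average_of_stabilizing_form_constant_general
    (a d : ℝ)
    (ρ : ℝ → ℝ) (hρpos : ∀ r ∈ Ioo a d, 0 < ρ r)
    (Xbar : ℝ × ℝ × ℝ) (hXbar : Xbar.1 = 0)
    (X : ℝ × ℝ × ℝ → ℝ × ℝ × ℝ) (hX : ∀ p, X p = ρ p.1 • Xbar)
    (ν : ℝ × ℝ × ℝ → (ℝ × ℝ × ℝ →L[ℝ] ℝ))
    (hνC1 : ContDiff ℝ 1 ν) (hνper : TorPeriodic ν)
    (hiXdν : ∀ p : ℝ × ℝ × ℝ, p.1 ∈ Ioo a d →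
      ∀ v : ℝ × ℝ × ℝ, fderiv ℝ ν p (X p) v = fderiv ℝ ν p v (X p)) :
    ∀ r₁ ∈ Ioo a d, ∀ r₂ ∈ Ioo a d,
      (∫ θ in (0:ℝ)..1, ∫ φ in (0:ℝ)..1, ν (r₁, θ, φ) Xbar) =
      (∫ θ in (0:ℝ)..1, ∫ φ in (0:ℝ)..1, ν (r₂, θ, φ) Xbar) := by
  intro r₁ hr₁ r₂ hr₂
  have hg : ContDiff ℝ 1 fun q => ν q Xbar := hνC1.clm_apply contDiff_const
  have hk : ContDiff ℝ 1 fun q => ν q (1, 0, 0) := hνC1.clm_apply contDiff_const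
  have hzero : ∀ r ∈ uIcc r₁ r₂,
      torusAverage (fun p => fderiv ℝ (fun q => ν q Xbar) p (1, 0, 0)) r = 0 := by
    intro r hr
    have hr' : r ∈ Ioo a d := ordConnected_Ioo.uIcc_subset hr₁ hr₂ hr
    have hcomm : ∀ θ φ : ℝ, fderiv ℝ (fun q => ν q Xbar) (r, θ, φ) (1, 0, 0) =
        fderiv ℝ (fun q => ν q (1, 0, 0)) (r, θ, φ) Xbar := fun θ φ =>
      fderiv_clm_apply_const_comm_of_smul (hνC1.differentiable one_ne_zero _) (hρpos r hr').ne'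
        (by simpa only [hX] using hiXdν (r, θ, φ) hr' (1, 0, 0))
    simp only [torusAverage, hcomm]
    exact torusAverage_fderiv_eq_zero hk (hνper.comp fun L => L (1, 0, 0)) hXbar r
  have h := torusAverage_eq_add_integral_fderiv hg r₁ r₂
  rw [integral_congr hzero, integral_zero, add_zero] at h
  exact h.symm

/-- For a vector field `X(p) = ρ(p₁) • X̄` tangent to the tori `{r} × T²` and a
`C¹` toroidally periodic `1`-form `ν` with `i_X dν = 0` on `(a,d) × T²`, the torus average
`c(r) = ∫ ν(r,θ,φ)(X̄) dθ dφ` is constant in `r ∈ (a,d)`. -/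
theorem torus_average_of_stabilizing_form_constant
    (a d : ℝ) (had : a < d)
    (ρ : ℝ → ℝ) (hρcont : Continuous ρ) (hρpos : ∀ r ∈ Ioo a d, 0 < ρ r)
    (Xbar : ℝ × ℝ × ℝ) (hXbar : Xbar.1 = 0)
    (X : ℝ × ℝ × ℝ → ℝ × ℝ × ℝ) (hX : ∀ p, X p = ρ p.1 • Xbar)
    (ν : ℝ × ℝ × ℝ → (ℝ × ℝ × ℝ →L[ℝ] ℝ))
    (hνC1 : ContDiff ℝ 1 ν) (hνper : TorPeriodic ν)
    (hiXdν : ∀ p : ℝ × ℝ × ℝ, p.1 ∈ Ioo a d →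
      ∀ v : ℝ × ℝ × ℝ, fderiv ℝ ν p (X p) v = fderiv ℝ ν p v (X p)) :
    ∀ r₁ ∈ Ioo a d, ∀ r₂ ∈ Ioo a d,
      (∫ θ in (0:ℝ)..1, ∫ φ in (0:ℝ)..1, ν (r₁, θ, φ) Xbar) =
      (∫ θ in (0:ℝ)..1, ∫ φ in (0:ℝ)..1, ν (r₂, θ, φ) Xbar) :=
  torus_average_of_stabilizing_form_constant_general a d ρ hρpos Xbar hXbar X hX ν hνC1 hνper hiXdν
end

section
/- Let ε > 0, T₀ ∈ ℝ, and let χ : ℝ → ℝ be differentiable on [0, ε) with χ(s) ≥ 0 and χ'(s) ≥ 0 for all s ∈ [0, ε), and χ(0) = 0. Define H : ℝ² → ℝ by H(x,y) = T₀ + χ(x² + y²)·(y² − x²). Then every critical point (x,y) of H with x² + y² < ε satisfies χ(x² + y²) = 0. -/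
/-!
Evaluating the differential of `H` at `(x, y)` on the vector `(-x, y)` gives
`2 (χ'(s) (y² - x²)² + χ(s) s)` with `s = x² + y²`. At a critical point this vanishes, and both
summands are nonnegative, so `χ(s) s = 0`; hence `χ(s) = 0`, using `χ(0) = 0` when `s = 0`.
-/

open Set

theorem fderiv_radial_mul_apply_hyperbolic (c : ℝ) {χ : ℝ → ℝ} {x y : ℝ}
    (hχ : DifferentiableAt ℝ χ (x ^ 2 + y ^ 2)) :
    fderiv ℝ (fun p : ℝ × ℝ => c + χ (p.1 ^ 2 + p.2 ^ 2) * (p.2 ^ 2 - p.1 ^ 2)) (x, y) (-x, y) =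
      2 * (deriv χ (x ^ 2 + y ^ 2) * (y ^ 2 - x ^ 2) ^ 2 + χ (x ^ 2 + y ^ 2) * (x ^ 2 + y ^ 2)) := by
  have hfst := (hasFDerivAt_fst (𝕜 := ℝ) (p := (x, y))).pow 2
  have hsnd := (hasFDerivAt_snd (𝕜 := ℝ) (p := (x, y))).pow 2
  have h : HasFDerivAt (fun p : ℝ × ℝ => c + χ (p.1 ^ 2 + p.2 ^ 2) * (p.2 ^ 2 - p.1 ^ 2)) _ (x, y) :=
    ((hχ.hasDerivAt.comp_hasFDerivAt (x, y) (hfst.add hsnd)).mul (hsnd.sub hfst)).const_add c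
  rw [h.fderiv]
  simp
  ring

theorem critical_points_of_modified_hamiltonian_general
    (ε : ℝ) (T₀ : ℝ)
    (χ : ℝ → ℝ)
    (hχdiff : ∀ s ∈ Ico (0:ℝ) ε, DifferentiableAt ℝ χ s)
    (hχnonneg : ∀ s ∈ Ico (0:ℝ) ε, 0 ≤ χ s)
    (hχ'nonneg : ∀ s ∈ Ico (0:ℝ) ε, 0 ≤ deriv χ s)
    (hχzero : χ 0 = 0)
    (H : ℝ × ℝ → ℝ)
    (hH : ∀ p : ℝ × ℝ, H p = T₀ + χ (p.1 ^ 2 + p.2 ^ 2) * (p.2 ^ 2 - p.1 ^ 2))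
    (x y : ℝ) (hxy : x ^ 2 + y ^ 2 < ε)
    (hcrit : fderiv ℝ H (x, y) = 0) :
    χ (x ^ 2 + y ^ 2) = 0 := by
  have hs : x ^ 2 + y ^ 2 ∈ Ico (0:ℝ) ε := ⟨by positivity, hxy⟩
  have hderiv := fderiv_radial_mul_apply_hyperbolic T₀ (hχdiff _ hs)
  rw [← funext hH, hcrit, zero_apply] at hderiv
  have hχ_mul : χ (x ^ 2 + y ^ 2) * (x ^ 2 + y ^ 2) = 0 := by
    nlinarith [mul_nonneg (hχ'nonneg _ hs) (sq_nonneg (y ^ 2 - x ^ 2)),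
      mul_nonneg (hχnonneg _ hs) hs.1]
  rcases mul_eq_zero.mp hχ_mul with h | h
  · exact h
  · rw [h, hχzero]

/-- Critical points of `H(x,y) = T₀ + χ(x² + y²)(y² − x²)` inside the disk
`x² + y² < ε`, for a nonnegative nondecreasing differentiable cutoff `χ` with `χ(0) = 0`,
satisfy `χ(x² + y²) = 0`. -/
theorem critical_points_of_modified_hamiltonian
    (ε : ℝ) (hε : 0 < ε) (T₀ : ℝ)
    (χ : ℝ → ℝ)
    (hχdiff : ∀ s ∈ Ico (0:ℝ) ε, DifferentiableAt ℝ χ s)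
    (hχnonneg : ∀ s ∈ Ico (0:ℝ) ε, 0 ≤ χ s)
    (hχ'nonneg : ∀ s ∈ Ico (0:ℝ) ε, 0 ≤ deriv χ s)
    (hχzero : χ 0 = 0)
    (H : ℝ × ℝ → ℝ)
    (hH : ∀ p : ℝ × ℝ, H p = T₀ + χ (p.1 ^ 2 + p.2 ^ 2) * (p.2 ^ 2 - p.1 ^ 2))
    (x y : ℝ) (hxy : x ^ 2 + y ^ 2 < ε)
    (hcrit : fderiv ℝ H (x, y) = 0) :
    χ (x ^ 2 + y ^ 2) = 0 :=
  critical_points_of_modified_hamiltonian_general ε T₀ χ hχdiff hχnonneg hχ'nonneg hχzero H hH x y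
    hxy hcrit
end
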